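/- Approximation of the finite-window local spectral averages (Lemma C.1). Fix K < ∞, κ > 3, 0 < λ_inf ≤ λ_sup < ∞ and N₀ ∈ ℕ. There exists a constant 𝒦 < ∞, depending only on K and κ, such that whenever Assumption LS(p, K, κ, λ_inf, λ_sup, N₀) holds: for all u ∈ ℝ, all N ∈ ℕ, all even M ∈ ℕ and all ω ∈ [0, 2π], ‖G_{u,M}(ω) − G^{(N)}_{u,M}(ω)‖₂ ≤ 𝒦 M/N and ‖G_u(ω) − G_{u,M}(ω)‖₂ ≤ 𝒦 (1/M + 1/M^{κ−1}). -/

import Mathlib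

noncomputable section

/-- `⟨x⟩ = max(1,|x|)` -/
def gu (x : ℝ) : ℝ := max 1 |x|

/-- `ζ(x) = max(1, log⟨x⟩)/⟨x⟩` -/
def zeta (x : ℝ) : ℝ := max 1 (Real.log (gu x)) / gu x

/-- spectral norm of a matrix -/
def specNorm {𝕜 : Type*} [RCLike 𝕜] {m n : Type*} [Fintype m] [Fintype n] [DecidableEq n]
    (M : Matrix m n 𝕜) : ℝ :=
  ‖LinearMap.toContinuousLinearMap (Matrix.toEuclideanLin M)‖

/-- `ℓ²(ι; ℝ^p)` -/
abbrev HpI (ι : Type) (p : ℕ) : Type := lp (fun _ : ι => EuclideanSpace ℝ (Fin p)) 2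

abbrev Hp (p : ℕ) : Type := HpI ℤ p

/-- the sequence `δ_t ⊗ e_a` -/
def bvec {ι : Type} [DecidableEq ι] (p : ℕ) (t : ι) (a : Fin p) : HpI ι p :=
  lp.single 2 t (EuclideanSpace.single a 1)

/-- the `p × p` block `A_{t,τ}` of an operator -/
def blk {ι : Type} [DecidableEq ι] {p : ℕ} (A : HpI ι p →L[ℝ] HpI ι p) (t τ : ι) :
    Matrix (Fin p) (Fin p) ℝ :=
  Matrix.of fun a b => inner (𝕜 := ℝ) (bvec p t a) (A (bvec p τ b))


/-- Assumption LS(p, K, κ, λ_inf, λ_sup, N₀): a locally stationary family of covariance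
operators `𝐂^(N)` together with the smooth local autocovariance functions `C_r(·)`. -/
structure AssumptionLS (p : ℕ) (K κ lamInf lamSup : ℝ) (N₀ : ℕ)
    (C : ℕ → Hp p →L[ℝ] Hp p) (Cr : ℤ → ℝ → Matrix (Fin p) (Fin p) ℝ) : Prop where
  symm : ∀ (N : ℕ) (x y : Hp p), inner (𝕜 := ℝ) ((C N) x) y = inner (𝕜 := ℝ) x ((C N) y)
  lower : ∀ N : ℕ, N₀ ≤ N → ∀ v : Hp p, lamInf * ‖v‖ ^ 2 ≤ inner (𝕜 := ℝ) v ((C N) v)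
  upper : ∀ N : ℕ, N₀ ≤ N → ∀ v : Hp p, inner (𝕜 := ℝ) v ((C N) v) ≤ lamSup * ‖v‖ ^ 2
  decay : ∀ N : ℕ, 1 ≤ N → ∀ t τ : ℤ,
    specNorm (blk (C N) t τ) ≤ K * gu ((t : ℝ) - (τ : ℝ)) ^ (-κ)
  crSymm : ∀ (r : ℤ) (u : ℝ), Cr r u = (Cr (-r) u).transpose
  crBound : ∀ (r : ℤ) (u : ℝ), specNorm (Cr r u) ≤ K * gu (r : ℝ) ^ (-κ)
  crLip : ∀ (r : ℤ) (u v : ℝ),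
    specNorm (Cr r u - Cr r v) ≤ K * |u - v| * gu (r : ℝ) ^ (-κ)
  approx : ∀ N : ℕ, 1 ≤ N → ∀ t τ : ℤ,
    specNorm (blk (C N) t τ - Cr (t - τ) ((t : ℝ) / (N : ℝ))) ≤
      K * gu ((t : ℝ) - (τ : ℝ)) ^ (-κ + 1) *
        min (1 / (N : ℝ)) (2 / gu ((t : ℝ) - (τ : ℝ)))

/-- the finite-window average `G^{(N)}_{u,M}(ω)` of the nonstationary covariance -/
def GfinN {p : ℕ} (C : Hp p →L[ℝ] Hp p) (u : ℝ) (N M : ℕ) (ω : ℝ) :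
    Matrix (Fin p) (Fin p) ℂ :=
  ((M : ℂ))⁻¹ •
    ∑ t ∈ Finset.Icc (⌊u * N⌋ - (M : ℤ) / 2 + 1) (⌊u * N⌋ + (M : ℤ) / 2),
      ∑ τ ∈ Finset.Icc (⌊u * N⌋ - (M : ℤ) / 2 + 1) (⌊u * N⌋ + (M : ℤ) / 2),
        Complex.exp (Complex.I * ((t : ℂ) - (τ : ℂ)) * (ω : ℂ)) •
          (blk C t τ).map Complex.ofReal

/-- the finite-window average `G_{u,M}(ω)` of the local autocovariances -/
def GfinU {p : ℕ} (Cr : ℤ → ℝ → Matrix (Fin p) (Fin p) ℝ) (u : ℝ) (N M : ℕ) (ω : ℝ) :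
    Matrix (Fin p) (Fin p) ℂ :=
  ((M : ℂ))⁻¹ •
    ∑ t ∈ Finset.Icc (⌊u * N⌋ - (M : ℤ) / 2 + 1) (⌊u * N⌋ + (M : ℤ) / 2),
      ∑ τ ∈ Finset.Icc (⌊u * N⌋ - (M : ℤ) / 2 + 1) (⌊u * N⌋ + (M : ℤ) / 2),
        Complex.exp (Complex.I * ((t : ℂ) - (τ : ℂ)) * (ω : ℂ)) •
          (Cr (t - τ) u).map Complex.ofReal

/-- the local spectral density `G_u(ω) = Σ_{r∈ℤ} C_r(u) e^{irω}` -/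
def Gfull {p : ℕ} (Cr : ℤ → ℝ → Matrix (Fin p) (Fin p) ℝ) (u : ℝ) (ω : ℝ) :
    Matrix (Fin p) (Fin p) ℂ :=
  ∑' r : ℤ, Complex.exp (Complex.I * (r : ℂ) * (ω : ℂ)) • (Cr r u).map Complex.ofReal

/-!
Both bounds are proved term by term against the summable weight `⟨r⟩^{1-κ}`.
On the window, `|t/N - u| ≤ M/N`, so the Lipschitz bound on `C_r(·)` together with
the approximation bound gives `‖C_{t-τ}(u) - C^{(N)}_{t,τ}‖ ≤ 2K (M/N) ⟨t-τ⟩^{1-κ}`; summing over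
`τ` costs `∑_r ⟨r⟩^{1-κ}`, and the sum over `t` costs a factor `M` that cancels the `1/M`.
For the second bound, counting the pairs of the window with `t - τ = r` gives
`G_{u,M}(ω) = ∑_{|r| < M} (1 - |r|/M) C_r(u) e^{irω}`, so the `r`-th coefficient of
`G_u - G_{u,M}` has modulus at most `|r|/M`, and `|r| ⟨r⟩^{-κ} ≤ ⟨r⟩^{1-κ}`.
-/

open Finset Complex
-- `specNorm` is definitionally the norm of this instance, so the bounds below apply to it as is.
open scoped Matrix.Norms.L2Operator

lemma one_le_gu (x : ℝ) : 1 ≤ gu x := le_max_left _ _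

lemma gu_pos (x : ℝ) : 0 < gu x := one_pos.trans_le (one_le_gu x)

lemma abs_le_gu (x : ℝ) : |x| ≤ gu x := le_max_right _ _

lemma gu_zero : gu 0 = 1 := by simp [gu]

lemma gu_rpow_nonneg (x s : ℝ) : 0 ≤ gu x ^ s := Real.rpow_nonneg (gu_pos x).le s

lemma gu_rpow_le_rpow {a b : ℝ} (hab : a ≤ b) (x : ℝ) : gu x ^ a ≤ gu x ^ b :=
  Real.rpow_le_rpow_of_exponent_le (one_le_gu x) hab

lemma gu_mul_rpow (x s : ℝ) : gu x * gu x ^ s = gu x ^ (s + 1) := by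
  rw [Real.rpow_add_one (gu_pos x).ne', mul_comm]

lemma summable_gu_rpow_neg {s : ℝ} (hs : 1 < s) : Summable fun r : ℤ => gu r ^ (-s) := by
  refine (Real.summable_abs_int_rpow hs).of_norm_bounded_eventually ?_
  filter_upwards [(Set.finite_singleton (0 : ℤ)).compl_mem_cofinite] with r hr
  have h1 : (1 : ℝ) ≤ |(r : ℝ)| := by
    rw [← Int.cast_abs]; exact_mod_cast Int.one_le_abs hr
  rw [Real.norm_of_nonneg (gu_rpow_nonneg r _), gu, max_eq_right h1]

def weightSum (s : ℝ) : ℝ := ∑' r : ℤ, gu r ^ (-s)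

lemma one_le_weightSum {s : ℝ} (hs : 1 < s) : 1 ≤ weightSum s := by
  simpa [gu_zero, weightSum] using (summable_gu_rpow_neg hs).le_tsum 0 fun r _ =>
    gu_rpow_nonneg r (-s)

lemma sum_gu_sub_rpow_neg_le {s : ℝ} (hs : 1 < s) (t : ℤ) (W : Finset ℤ) :
    ∑ τ ∈ W, gu ((t : ℝ) - τ) ^ (-s) ≤ weightSum s := by
  have hshift : Summable fun τ : ℤ => gu ((t - τ : ℤ) : ℝ) ^ (-s) :=
    (Equiv.subLeft t).summable_iff.mpr (summable_gu_rpow_neg hs)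
  calc ∑ τ ∈ W, gu ((t : ℝ) - τ) ^ (-s) ≤ ∑' τ : ℤ, gu ((t - τ : ℤ) : ℝ) ^ (-s) := by
        push_cast at hshift ⊢
        exact hshift.sum_le_tsum W fun r _ => gu_rpow_nonneg _ _
    _ = weightSum s := (Equiv.subLeft t).tsum_eq fun r : ℤ => gu r ^ (-s)

lemma EuclideanSpace.norm_sq_eq_norm_sq_re_add_norm_sq_im {n : Type*} [Fintype n]
    (v : EuclideanSpace ℂ n) :
    ‖v‖ ^ 2 = ‖WithLp.toLp 2 fun j => (v j).re‖ ^ 2 + ‖WithLp.toLp 2 fun j => (v j).im‖ ^ 2 := by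
  simp only [EuclideanSpace.norm_sq_eq, ← Finset.sum_add_distrib, Complex.sq_norm,
    Complex.normSq_apply, Real.norm_eq_abs, sq_abs]
  simp [sq]

open Matrix in
lemma Matrix.l2_opNorm_map_ofReal_le {m n : Type*} [Fintype m] [Fintype n] [DecidableEq n]
    (A : Matrix m n ℝ) : ‖A.map ((↑) : ℝ → ℂ)‖ ≤ ‖A‖ := by
  rw [l2_opNorm_def]
  refine ContinuousLinearMap.opNorm_le_bound _ (norm_nonneg _) fun v => ?_
  set x : EuclideanSpace ℝ n := WithLp.toLp 2 fun j => (v j).re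
  set y : EuclideanSpace ℝ n := WithLp.toLp 2 fun j => (v j).im
  have hx := l2_opNorm_mulVec A x
  have hy := l2_opNorm_mulVec A y
  have hAv : ‖(toEuclideanLin ≪≫ₗ LinearMap.toContinuousLinearMap) (A.map ((↑) : ℝ → ℂ)) v‖ ^ 2
      = ‖(EuclideanSpace.equiv m ℝ).symm (A *ᵥ x.ofLp)‖ ^ 2
        + ‖(EuclideanSpace.equiv m ℝ).symm (A *ᵥ y.ofLp)‖ ^ 2 := by
    rw [EuclideanSpace.norm_sq_eq_norm_sq_re_add_norm_sq_im]
    congr 3 <;> ext i <;>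
      simp [mulVec, dotProduct, Complex.re_sum, Complex.im_sum, x, y, toLpLin_apply]
  refine le_of_pow_le_pow_left₀ two_ne_zero (by positivity) ?_
  rw [hAv, mul_pow, EuclideanSpace.norm_sq_eq_norm_sq_re_add_norm_sq_im v]
  nlinarith [pow_le_pow_left₀ (norm_nonneg _) hx 2, pow_le_pow_left₀ (norm_nonneg _) hy 2]

lemma Int.card_filter_sub_mem_Icc (A B r : ℤ) :
    #{t ∈ Icc A B | t - r ∈ Icc A B} = (B - A + 1 - |r|).toNat := by
  have hfilter : {t ∈ Icc A B | t - r ∈ Icc A B} = Icc (max A (A + r)) (min B (B + r)) := by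
    ext t
    simp only [mem_filter, mem_Icc, le_min_iff, max_le_iff]
    omega
  rw [hfilter, Int.card_Icc]
  rcases abs_cases r with ⟨h, _⟩ | ⟨h, _⟩ <;> rw [h] <;> omega

lemma Int.sum_Icc_sum_Icc_sub {α : Type*} [AddCommMonoid α] (f : ℤ → α) (A B : ℤ) :
    ∑ t ∈ Icc A B, ∑ τ ∈ Icc A B, f (t - τ)
      = ∑ r ∈ Icc (A - B) (B - A), (B - A + 1 - |r|).toNat • f r := by
  have hinner : ∀ t ∈ Icc A B, ∑ τ ∈ Icc A B, f (t - τ)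
      = ∑ r ∈ Icc (A - B) (B - A), if t - r ∈ Icc A B then f r else 0 := by
    intro t ht
    rw [← sum_filter]
    refine sum_nbij' (t - ·) (t - ·) ?_ ?_ (fun _ _ => by simp) (fun _ _ => by simp)
      (fun _ _ => rfl)
    all_goals intro x hx; simp only [mem_filter, mem_Icc] at ht hx ⊢; omega
  rw [sum_congr rfl hinner, sum_comm]
  refine sum_congr rfl fun r _ => ?_
  rw [← sum_filter, sum_const, Int.card_filter_sub_mem_Icc]

lemma Int.hasSum_nsmul_sum_Icc_sum_Icc_sub {α : Type*} [AddCommMonoid α] [TopologicalSpace α]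
    (f : ℤ → α) (A B : ℤ) :
    HasSum (fun r => (B - A + 1 - |r|).toNat • f r) (∑ t ∈ Icc A B, ∑ τ ∈ Icc A B, f (t - τ)) := by
  rw [Int.sum_Icc_sum_Icc_sub]
  refine hasSum_sum_of_ne_finset_zero fun r hr => ?_
  have hcount : (B - A + 1 - |r|).toNat = 0 := by
    simp only [mem_Icc, not_and_or, not_le] at hr
    rcases abs_cases r with ⟨h, _⟩ | ⟨h, _⟩ <;> omega
  rw [hcount, zero_smul]

lemma norm_cexp_I_mul_smul_map_ofReal_le {m n : Type*} [Fintype m] [Fintype n] [DecidableEq n]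
    (z : ℂ) (hz : z.im = 0) (ω : ℝ) (A : Matrix m n ℝ) :
    ‖cexp (I * z * ω) • A.map ((↑) : ℝ → ℂ)‖ ≤ ‖A‖ := by
  rw [norm_smul, Complex.norm_exp]
  simpa [hz] using Matrix.l2_opNorm_map_ofReal_le A

lemma norm_sum_sum_cexp_smul_map_ofReal_le {m n : Type*} [Fintype m] [Fintype n] [DecidableEq n]
    (W : Finset ℤ) (ω : ℝ) (D : ℤ → ℤ → Matrix m n ℝ) :
    ‖∑ t ∈ W, ∑ τ ∈ W, cexp (I * ((t : ℂ) - τ) * ω) • (D t τ).map ((↑) : ℝ → ℂ)‖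
      ≤ ∑ t ∈ W, ∑ τ ∈ W, ‖D t τ‖ :=
  norm_sum_le_of_le _ fun t _ => norm_sum_le_of_le _ fun τ _ =>
    norm_cexp_I_mul_smul_map_ofReal_le _ (by simp) ω _

lemma sum_sum_mul_gu_sub_rpow_neg_le {s : ℝ} (hs : 1 < s) {c : ℝ} (hc : 0 ≤ c) (W : Finset ℤ) :
    ∑ t ∈ W, ∑ τ ∈ W, c * gu ((t : ℝ) - τ) ^ (-s) ≤ #W * (c * weightSum s) := by
  rw [← nsmul_eq_mul, ← sum_const]
  refine sum_le_sum fun t _ => ?_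
  rw [← mul_sum]
  exact mul_le_mul_of_nonneg_left (sum_gu_sub_rpow_neg_le hs t W) hc

def localWindow (u : ℝ) (N M : ℕ) : Finset ℤ :=
  Icc (⌊u * N⌋ - (M : ℤ) / 2 + 1) (⌊u * N⌋ + (M : ℤ) / 2)

section LocalWindow

variable {u : ℝ} {N M : ℕ}

lemma card_localWindow (hM : Even M) : #(localWindow u N M) = M := by
  obtain ⟨k, rfl⟩ := hM
  rw [localWindow, Int.card_Icc]
  omega

lemma abs_sub_div_le_of_mem_localWindow (hN : 1 ≤ N) {t : ℤ} (ht : t ∈ localWindow u N M) :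
    |u - t / N| ≤ M / N := by
  have hNpos : (0 : ℝ) < N := by exact_mod_cast hN
  have hfloor := Int.floor_le (u * N)
  have hfloor' := Int.lt_floor_add_one (u * N)
  rw [localWindow, mem_Icc] at ht
  have hlo : ((⌊u * N⌋ - (M : ℤ) / 2 + 1 : ℤ) : ℝ) ≤ t := by exact_mod_cast ht.1
  have hhi : (t : ℝ) ≤ ((⌊u * N⌋ + (M : ℤ) / 2 : ℤ) : ℝ) := by exact_mod_cast ht.2
  have hhalf : (0 : ℤ) ≤ (M : ℤ) / 2 ∧ (M : ℤ) / 2 ≤ M := by omega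
  have hhalf₀ : (0 : ℝ) ≤ (((M : ℤ) / 2 : ℤ) : ℝ) := by exact_mod_cast hhalf.1
  have hhalf₁ : (((M : ℤ) / 2 : ℤ) : ℝ) ≤ M := by exact_mod_cast hhalf.2
  push_cast at hlo hhi
  rw [sub_div' hNpos.ne', abs_div, abs_of_pos hNpos, div_le_div_iff_of_pos_right hNpos, abs_le]
  constructor <;> linarith

end LocalWindow

def fourierTerm {p : ℕ} (Cr : ℤ → ℝ → Matrix (Fin p) (Fin p) ℝ) (u ω : ℝ) (r : ℤ) :
    Matrix (Fin p) (Fin p) ℂ :=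
  cexp (I * r * ω) • (Cr r u).map ((↑) : ℝ → ℂ)

lemma GfinU_eq_smul_sum_sum_fourierTerm {p : ℕ} (Cr : ℤ → ℝ → Matrix (Fin p) (Fin p) ℝ)
    (u : ℝ) (N M : ℕ) (ω : ℝ) :
    GfinU Cr u N M ω
      = (M : ℂ)⁻¹ • ∑ t ∈ localWindow u N M, ∑ τ ∈ localWindow u N M,
          fourierTerm Cr u ω (t - τ) := by
  simp only [GfinU, fourierTerm, localWindow, Int.cast_sub]

lemma GfinU_sub_GfinN {p : ℕ} (Cr : ℤ → ℝ → Matrix (Fin p) (Fin p) ℝ) (C : Hp p →L[ℝ] Hp p)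
    (u : ℝ) (N M : ℕ) (ω : ℝ) :
    GfinU Cr u N M ω - GfinN C u N M ω
      = (M : ℂ)⁻¹ • ∑ t ∈ localWindow u N M, ∑ τ ∈ localWindow u N M,
          cexp (I * ((t : ℂ) - τ) * ω) • (Cr (t - τ) u - blk C t τ).map ((↑) : ℝ → ℂ) := by
  simp only [GfinU, GfinN, localWindow, ← smul_sub, ← sum_sub_distrib,
    ← Matrix.map_sub _ Complex.ofReal_sub]

lemma hasSum_GfinU {p : ℕ} (Cr : ℤ → ℝ → Matrix (Fin p) (Fin p) ℝ) (u : ℝ) (N : ℕ) {M : ℕ}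
    (hM : Even M) (ω : ℝ) :
    HasSum (fun r => (M : ℂ)⁻¹ • ((M : ℤ) - |r|).toNat • fourierTerm Cr u ω r)
      (GfinU Cr u N M ω) := by
  have hlen : ⌊u * N⌋ + (M : ℤ) / 2 - (⌊u * N⌋ - (M : ℤ) / 2 + 1) + 1 = M := by
    obtain ⟨k, rfl⟩ := hM
    omega
  have hsum := (Int.hasSum_nsmul_sum_Icc_sum_Icc_sub (fourierTerm Cr u ω)
    (⌊u * N⌋ - (M : ℤ) / 2 + 1) (⌊u * N⌋ + (M : ℤ) / 2)).const_smul (M : ℂ)⁻¹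
  rw [hlen] at hsum
  rwa [GfinU_eq_smul_sum_sum_fourierTerm]

lemma abs_one_sub_toNat_sub_abs_div_le {M : ℕ} (hM : 0 < M) (r : ℤ) :
    |1 - (((M : ℤ) - |r|).toNat : ℝ) / M| ≤ |(r : ℝ)| / M := by
  have hMpos : (0 : ℝ) < M := by exact_mod_cast hM
  rcases le_total |r| M with hr | hr
  · have hcast : (((M : ℤ) - |r|).toNat : ℝ) = M - |(r : ℝ)| := by
      rw [← Int.cast_natCast, Int.toNat_of_nonneg (by omega)]
      push_cast
      rfl
    rw [hcast, one_sub_div hMpos.ne', sub_sub_cancel, abs_of_nonneg (by positivity)]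
  · have hr' : (M : ℝ) ≤ |(r : ℝ)| := by exact_mod_cast hr
    rw [Int.toNat_eq_zero.mpr (by omega), Nat.cast_zero, zero_div, sub_zero, abs_one,
      le_div_iff₀ hMpos, one_mul]
    exact hr'

namespace AssumptionLS

variable {p : ℕ} {K κ lamInf lamSup : ℝ} {N₀ : ℕ} {C : ℕ → Hp p →L[ℝ] Hp p}
  {Cr : ℤ → ℝ → Matrix (Fin p) (Fin p) ℝ}

lemma K_nonneg (h : AssumptionLS p K κ lamInf lamSup N₀ C Cr) : 0 ≤ K := by
  simpa [gu_zero] using (norm_nonneg _).trans (h.crBound 0 0)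

lemma norm_Cr_sub_blk_le (h : AssumptionLS p K κ lamInf lamSup N₀ C Cr) {u : ℝ} {N M : ℕ}
    (hN : 1 ≤ N) (hM : 1 ≤ M) {t : ℤ} (ht : t ∈ localWindow u N M) (τ : ℤ) :
    ‖Cr (t - τ) u - blk (C N) t τ‖ ≤ 2 * K * M / N * gu ((t : ℝ) - τ) ^ (-(κ - 1)) := by
  have hK := h.K_nonneg
  have hlip :
      ‖Cr (t - τ) u - Cr (t - τ) (t / N)‖ ≤ K * (M / N) * gu ((t : ℝ) - τ) ^ (-(κ - 1)) := by
    refine (h.crLip (t - τ) u (t / N)).trans ?_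
    push_cast
    exact mul_le_mul (mul_le_mul_of_nonneg_left (abs_sub_div_le_of_mem_localWindow hN ht) hK)
      (gu_rpow_le_rpow (by linarith) _) (gu_rpow_nonneg _ _) (by positivity)
  have happrox :
      ‖Cr (t - τ) (t / N) - blk (C N) t τ‖ ≤ K * (1 / N) * gu ((t : ℝ) - τ) ^ (-(κ - 1)) := by
    rw [norm_sub_rev]
    refine (h.approx N hN t τ).trans ?_
    rw [show -κ + 1 = -(κ - 1) by ring, mul_right_comm]
    gcongr
    exacts [gu_rpow_nonneg _ _, min_le_left _ _]
  have hM' : (1 : ℝ) ≤ M := by exact_mod_cast hM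
  calc ‖Cr (t - τ) u - blk (C N) t τ‖
      ≤ ‖Cr (t - τ) u - Cr (t - τ) (t / N)‖ + ‖Cr (t - τ) (t / N) - blk (C N) t τ‖ :=
        norm_sub_le_norm_sub_add_norm_sub _ _ _
    _ ≤ K * (M / N) * gu ((t : ℝ) - τ) ^ (-(κ - 1))
          + K * (1 / N) * gu ((t : ℝ) - τ) ^ (-(κ - 1)) := add_le_add hlip happrox
    _ ≤ 2 * K * M / N * gu ((t : ℝ) - τ) ^ (-(κ - 1)) := by
        rw [← add_mul]
        gcongr
        · exact gu_rpow_nonneg _ _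
        calc K * (M / N) + K * (1 / N) = K * (M + 1) / N := by ring
          _ ≤ K * (2 * M) / N := by gcongr; linarith
          _ = 2 * K * M / N := by ring

lemma norm_GfinU_sub_GfinN_le (h : AssumptionLS p K κ lamInf lamSup N₀ C Cr) (hκ : 2 < κ)
    (u : ℝ) {N M : ℕ} (hN : 1 ≤ N) (hM : Even M) (hM₀ : 0 < M) (ω : ℝ) :
    ‖GfinU Cr u N M ω - GfinN (C N) u N M ω‖ ≤ 2 * K * weightSum (κ - 1) * M / N := by
  have hc : 0 ≤ 2 * K * M / N := by have := h.K_nonneg; positivity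
  rw [GfinU_sub_GfinN, norm_smul, norm_inv, Complex.norm_natCast]
  calc (M : ℝ)⁻¹ * ‖∑ t ∈ localWindow u N M, ∑ τ ∈ localWindow u N M,
          cexp (I * ((t : ℂ) - τ) * ω) • (Cr (t - τ) u - blk (C N) t τ).map ((↑) : ℝ → ℂ)‖
      ≤ (M : ℝ)⁻¹ * ∑ t ∈ localWindow u N M, ∑ τ ∈ localWindow u N M,
          2 * K * M / N * gu ((t : ℝ) - τ) ^ (-(κ - 1)) := by
        gcongr
        refine (norm_sum_sum_cexp_smul_map_ofReal_le _ _ _).trans ?_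
        exact sum_le_sum fun t ht => sum_le_sum fun τ _ => h.norm_Cr_sub_blk_le hN hM₀ ht τ
    _ ≤ (M : ℝ)⁻¹ * (#(localWindow u N M) * (2 * K * M / N * weightSum (κ - 1))) := by
        gcongr
        exact sum_sum_mul_gu_sub_rpow_neg_le (by linarith) hc _
    _ = 2 * K * weightSum (κ - 1) * M / N := by
        rw [card_localWindow hM]
        field_simp

lemma norm_fourierTerm_le (h : AssumptionLS p K κ lamInf lamSup N₀ C Cr) (u ω : ℝ) (r : ℤ) :
    ‖fourierTerm Cr u ω r‖ ≤ K * gu r ^ (-κ) :=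
  (norm_cexp_I_mul_smul_map_ofReal_le _ (by simp) _ _).trans (h.crBound r u)

lemma hasSum_fourierTerm (h : AssumptionLS p K κ lamInf lamSup N₀ C Cr) (hκ : 1 < κ)
    (u ω : ℝ) : HasSum (fourierTerm Cr u ω) (Gfull Cr u ω) :=
  (((summable_gu_rpow_neg hκ).mul_left K).of_norm_bounded (h.norm_fourierTerm_le u ω)).hasSum

lemma norm_fourierTerm_sub_smul_le (h : AssumptionLS p K κ lamInf lamSup N₀ C Cr) (u ω : ℝ)
    {M : ℕ} (hM : 0 < M) (r : ℤ) :
    ‖fourierTerm Cr u ω r - (M : ℂ)⁻¹ • ((M : ℤ) - |r|).toNat • fourierTerm Cr u ω r‖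
      ≤ K / M * gu r ^ (-(κ - 1)) := by
  have hsmul : fourierTerm Cr u ω r - (M : ℂ)⁻¹ • ((M : ℤ) - |r|).toNat • fourierTerm Cr u ω r
      = ((1 - (((M : ℤ) - |r|).toNat : ℝ) / M : ℝ) : ℂ) • fourierTerm Cr u ω r := by
    rw [← Nat.cast_smul_eq_nsmul ℂ, smul_smul, Complex.ofReal_sub, sub_smul, Complex.ofReal_one,
      one_smul]
    congr 2
    push_cast
    ring
  rw [hsmul, norm_smul, Complex.norm_real, Real.norm_eq_abs]
  calc |1 - (((M : ℤ) - |r|).toNat : ℝ) / M| * ‖fourierTerm Cr u ω r‖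
      ≤ gu r / M * (K * gu r ^ (-κ)) := by
        refine mul_le_mul ?_ (h.norm_fourierTerm_le u ω r) (norm_nonneg _)
          (div_nonneg (gu_pos _).le M.cast_nonneg)
        exact (abs_one_sub_toNat_sub_abs_div_le hM r).trans (by gcongr; exact abs_le_gu _)
    _ = K / M * gu r ^ (-(κ - 1)) := by
        rw [show -(κ - 1) = -κ + 1 by ring, ← gu_mul_rpow]
        ring

lemma norm_Gfull_sub_GfinU_le (h : AssumptionLS p K κ lamInf lamSup N₀ C Cr) (hκ : 2 < κ)
    (u : ℝ) (N : ℕ) {M : ℕ} (hM : Even M) (hM₀ : 0 < M) (ω : ℝ) :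
    ‖Gfull Cr u ω - GfinU Cr u N M ω‖ ≤ K * weightSum (κ - 1) / M := by
  have hweights := (summable_gu_rpow_neg (s := κ - 1) (by linarith)).hasSum.mul_left (K / M)
  have hdiff := (h.hasSum_fourierTerm (by linarith) u ω).sub (hasSum_GfinU Cr u N hM ω)
  refine (hdiff.norm_le_of_bounded hweights (h.norm_fourierTerm_sub_smul_le u ω hM₀)).trans_eq ?_
  rw [weightSum]
  ring

end AssumptionLS

theorem local_spectral_average_approximation_general (K κ lamInf lamSup : ℝ) (N₀ : ℕ)
    (hκ : 3 < κ) :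
    ∃ 𝒦 : ℝ, 0 < 𝒦 ∧
      ∀ (p : ℕ), 1 ≤ p →
        ∀ (C : ℕ → Hp p →L[ℝ] Hp p) (Cr : ℤ → ℝ → Matrix (Fin p) (Fin p) ℝ),
          AssumptionLS p K κ lamInf lamSup N₀ C Cr →
          ∀ (u : ℝ) (N : ℕ), 1 ≤ N → ∀ M : ℕ, Even M → 2 ≤ M →
            ∀ ω ∈ Set.Icc (0 : ℝ) (2 * Real.pi),
              specNorm (GfinU Cr u N M ω - GfinN (C N) u N M ω) ≤
                𝒦 * (M : ℝ) / (N : ℝ) ∧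
              specNorm (Gfull Cr u ω - GfinU Cr u N M ω) ≤
                𝒦 * (1 / (M : ℝ) + 1 / (M : ℝ) ^ (κ - 1)) := by
  have hS := one_le_weightSum (s := κ - 1) (by linarith)
  have hK : K ≤ |K| + 1 := by linarith [le_abs_self K]
  refine ⟨2 * (|K| + 1) * weightSum (κ - 1), by positivity, ?_⟩
  intro p _ C Cr hLS u N hN M hM hM₂ ω _
  have hM₀ : 0 < M := by omega
  refine ⟨(hLS.norm_GfinU_sub_GfinN_le (by linarith) u hN hM hM₀ ω).trans ?_,
    (hLS.norm_Gfull_sub_GfinU_le (by linarith) u N hM hM₀ ω).trans ?_⟩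
  · gcongr
  · calc K * weightSum (κ - 1) / M ≤ 2 * (|K| + 1) * weightSum (κ - 1) * (1 / M) := by
          rw [mul_one_div]
          gcongr
          linarith [abs_nonneg K]
      _ ≤ 2 * (|K| + 1) * weightSum (κ - 1) * (1 / M + 1 / (M : ℝ) ^ (κ - 1)) := by
          gcongr
          exact le_add_of_nonneg_right (by positivity)

/-- Lemma C.1: approximation of the finite-window local spectral averages. -/
theorem local_spectral_average_approximation (K κ lamInf lamSup : ℝ) (N₀ : ℕ)
    (hκ : 3 < κ) (hInf : 0 < lamInf) (hle : lamInf ≤ lamSup) :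
    ∃ 𝒦 : ℝ, 0 < 𝒦 ∧
      ∀ (p : ℕ), 1 ≤ p →
        ∀ (C : ℕ → Hp p →L[ℝ] Hp p) (Cr : ℤ → ℝ → Matrix (Fin p) (Fin p) ℝ),
          AssumptionLS p K κ lamInf lamSup N₀ C Cr →
          ∀ (u : ℝ) (N : ℕ), 1 ≤ N → ∀ M : ℕ, Even M → 2 ≤ M →
            ∀ ω ∈ Set.Icc (0 : ℝ) (2 * Real.pi),
              specNorm (GfinU Cr u N M ω - GfinN (C N) u N M ω) ≤
                𝒦 * (M : ℝ) / (N : ℝ) ∧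
              specNorm (Gfull Cr u ω - GfinU Cr u N M ω) ≤
                𝒦 * (1 / (M : ℝ) + 1 / (M : ℝ) ^ (κ - 1)) :=
  local_spectral_average_approximation_general K κ lamInf lamSup N₀ hκ
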